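/- For every n ≥ 3, the matroid SAG(n−1,2) is I₄-free, triangle-free, and has critical number exactly 2. -/

import Mathlib

open Submodule Module

section Helpers

variable {V : Type*} [AddCommGroup V] [Module (ZMod 2) V]

lemma addself2 (v : V) : v + v = 0 := by
  have h : v + v = (2 : ZMod 2) • v := by rw [two_smul]
  have h2 : (2 : ZMod 2) = 0 := by decide
  rw [h, h2, zero_smul]

lemma c2 (p q : V) : p + (p + q) = q := by
  rw [← add_assoc, addself2, zero_add]

lemma c2r (p q : V) : p + q + q = p := by
  rw [add_assoc, addself2, add_zero]

lemma add_eq_zero_iff2 {p q : V} : p + q = 0 ↔ p = q := by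
  constructor
  · intro h
    have h1 := c2r p q
    rw [h, zero_add] at h1
    exact h1.symm
  · rintro rfl
    exact addself2 p

lemma codim_one_sum [FiniteDimensional (ZMod 2) V] {K L : Submodule (ZMod 2) V}
    (hKL : K ≤ L) (hr : finrank (ZMod 2) K + 1 = finrank (ZMod 2) L)
    {a b : V} (ha : a ∈ L) (ha' : a ∉ K) (hb : b ∈ L) (hb' : b ∉ K) : a + b ∈ K := by
  have haM : a ∈ K ⊔ span (ZMod 2) {a} :=
    Submodule.mem_sup_right (Submodule.mem_span_singleton_self a)
  have hML : K ⊔ span (ZMod 2) {a} ≤ L :=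
    sup_le hKL (Submodule.span_le.mpr (Set.singleton_subset_iff.mpr ha))
  have hne : K ≠ K ⊔ span (ZMod 2) {a} := by
    intro h
    rw [← h] at haM
    exact ha' haM
  have hlt : K < K ⊔ span (ZMod 2) {a} := lt_of_le_of_ne le_sup_left hne
  have h1 : finrank (ZMod 2) K <
      finrank (ZMod 2) (K ⊔ span (ZMod 2) {a} : Submodule (ZMod 2) V) :=
    Submodule.finrank_lt_finrank_of_lt hlt
  have h2 : finrank (ZMod 2) (K ⊔ span (ZMod 2) {a} : Submodule (ZMod 2) V) ≤
      finrank (ZMod 2) L := Submodule.finrank_mono hML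
  have heq : K ⊔ span (ZMod 2) {a} = L :=
    Submodule.eq_of_le_of_finrank_le hML (by omega)
  rw [← heq] at hb
  rcases Submodule.mem_sup.mp hb with ⟨k, hk, c, hc, hbc⟩
  rcases Submodule.mem_span_singleton.mp hc with ⟨t, rfl⟩
  have ht : t = 0 ∨ t = 1 := by
    have : ∀ u : ZMod 2, u = 0 ∨ u = 1 := by decide
    exact this t
  rcases ht with rfl | rfl
  · rw [zero_smul, add_zero] at hbc
    rw [← hbc] at hb'
    exact absurd hk hb'
  · rw [one_smul] at hbc
    have hab : a + b = k := by rw [← hbc, add_comm k a, c2]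
    rw [hab]
    exact hk

lemma finrank_sup_le2 [FiniteDimensional (ZMod 2) V] (p q : Submodule (ZMod 2) V) :
    finrank (ZMod 2) (p ⊔ q : Submodule (ZMod 2) V) ≤
      finrank (ZMod 2) p + finrank (ZMod 2) q := by
  have := Submodule.finrank_sup_add_finrank_inf_eq p q
  omega

lemma fs1 [FiniteDimensional (ZMod 2) V] (a : V) :
    finrank (ZMod 2) (span (ZMod 2) ({a} : Set V)) ≤ 1 := by
  by_cases h : a = 0
  · subst h
    rw [Submodule.span_zero_singleton, finrank_bot]
    omega
  · rw [finrank_span_singleton h]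

lemma fsinsert [FiniteDimensional (ZMod 2) V] (a : V) (s : Set V) :
    finrank (ZMod 2) (span (ZMod 2) (insert a s)) ≤
      finrank (ZMod 2) (span (ZMod 2) s) + 1 := by
  rw [Submodule.span_insert]
  have h1 := finrank_sup_le2 (span (ZMod 2) ({a} : Set V)) (span (ZMod 2) s)
  have h2 := fs1 (V := V) a
  omega

lemma fspair [FiniteDimensional (ZMod 2) V] (a b : V) :
    finrank (ZMod 2) (span (ZMod 2) ({a, b} : Set V)) ≤ 2 := by
  have h1 := fsinsert a ({b} : Set V)
  have h2 := fs1 (V := V) b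
  omega

lemma fstriple [FiniteDimensional (ZMod 2) V] (a b c : V) :
    finrank (ZMod 2) (span (ZMod 2) ({a, b, c} : Set V)) ≤ 3 := by
  have h1 := fsinsert a ({b, c} : Set V)
  have h2 := fspair (V := V) b c
  omega

lemma indep_key {B : Set V} (h : LinearIndependent (ZMod 2) ((↑) : B → V))
    {u : V} (hu : u ∈ B) (hs : u ∈ span (ZMod 2) (B \ {u})) : False := by
  have himg : (Subtype.val '' {z : B | (z : V) ≠ u}) = B \ {u} := by
    ext t
    constructor
    · rintro ⟨z, hz, rfl⟩
      exact ⟨z.2, hz⟩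
    · rintro ⟨ht, ht'⟩
      exact ⟨⟨t, ht⟩, ht', rfl⟩
  have hni := h.notMem_span_image (s := {z : B | (z : V) ≠ u}) (x := ⟨u, hu⟩) (by simp)
  rw [himg] at hni
  exact hni hs

end Helpers

/-- `E ∩ (W \ {0})` is a basis of the subspace `W` (independent and spanning `W`). -/
def MeetsInBasis {V : Type*} [AddCommGroup V] [Module (ZMod 2) V]
    (E : Set V) (W : Submodule (ZMod 2) V) : Prop :=
  LinearIndependent (ZMod 2) ((↑) : ↥(E ∩ ((W : Set V) \ {0})) → V) ∧
    Submodule.span (ZMod 2) (E ∩ ((W : Set V) \ {0})) = W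

/-- Triangle-freeness: no distinct `x, y ∈ E` with `x + y ∈ E`. -/
def TriFree {V : Type*} [AddCommGroup V] [Module (ZMod 2) V] (E : Set V) : Prop :=
  ¬ ∃ x ∈ E, ∃ y ∈ E, x ≠ y ∧ x + y ∈ E

set_option maxHeartbeats 1000000 in
/-- for `n ≥ 3`, the matroid `SAG(n-1,2)` — the `(n+1)`-dimensional matroid with
ground set `((G₀ \ {0}) \ (H₀ \ {0})) ∆ {x, y, x+y}` for nested subspaces `H₀ ⊆ G₀` of
dimensions `n-1`, `n`, `x ∉ G₀`, `y ∈ G₀ \ H₀` — is `I₄`-free, triangle-free, and has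
critical number exactly `2`. -/
theorem stmt11 {V : Type*} [AddCommGroup V] [Module (ZMod 2) V]
    [FiniteDimensional (ZMod 2) V] (n : ℕ) (hn : 3 ≤ n)
    (hV : Module.finrank (ZMod 2) V = n + 1)
    (G₀ H₀ : Submodule (ZMod 2) V) (hnest : H₀ ≤ G₀)
    (hG₀ : Module.finrank (ZMod 2) G₀ = n) (hH₀ : Module.finrank (ZMod 2) H₀ = n - 1)
    (x y : V) (hx : x ∉ G₀) (hy : y ∈ G₀) (hy' : y ∉ H₀)
    (E : Set V)
    (hEdef : E = symmDiff (((G₀ : Set V) \ {0}) \ ((H₀ : Set V) \ {0})) {x, y, x + y}) :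
    (∀ W : Submodule (ZMod 2) V, Module.finrank (ZMod 2) W = 4 → ¬ MeetsInBasis E W) ∧
    TriFree E ∧
    Module.finrank (ZMod 2) V -
        sSup {k : ℕ | ∃ W : Submodule (ZMod 2) V, Module.finrank (ZMod 2) W = k ∧
          ((W : Set V) \ {0}) ∩ E = ∅} = 2 := by
  -- basic facts
  have h0H : (0 : V) ∈ H₀ := zero_mem _
  have hyne0 : y ≠ 0 := fun h => hy' (h ▸ h0H)
  have hxy : x + y ∉ G₀ := by
    intro h
    have h2 := G₀.add_mem h hy
    rw [c2r] at h2
    exact hx h2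
  have hxne0 : x ≠ 0 := fun h => hx (h ▸ zero_mem G₀)
  have hxyne0 : x + y ≠ 0 := fun h => hxy (h ▸ zero_mem G₀)
  have hxnexy : x ≠ x + y := by
    intro h
    have h2 := c2 x y
    rw [← h, addself2] at h2
    exact hyne0 h2.symm
  -- membership characterization of E
  have hE : ∀ z : V, z ∈ E ↔ ((z ∈ G₀ ∧ z ∉ H₀ ∧ z ≠ y) ∨ z = x ∨ z = x + y) := by
    intro z
    rw [hEdef, Set.mem_symmDiff]
    simp only [Set.mem_diff, Set.mem_singleton_iff, SetLike.mem_coe, Set.mem_insert_iff]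
    constructor
    · rintro (⟨⟨⟨hzG, hz0⟩, hzH⟩, hzB⟩ | ⟨hzB, hzA⟩)
      · exact Or.inl ⟨hzG, fun h => hzH ⟨h, hz0⟩, fun h => hzB (Or.inr (Or.inl h))⟩
      · rcases hzB with rfl | rfl | rfl
        · exact Or.inr (Or.inl rfl)
        · exact absurd ⟨⟨hy, hyne0⟩, fun h => hy' h.1⟩ hzA
        · exact Or.inr (Or.inr rfl)
    · rintro (⟨hzG, hzH, hzy⟩ | rfl | rfl)
      · refine Or.inl ⟨⟨⟨hzG, fun h => hzH (h ▸ h0H)⟩, fun h => hzH h.1⟩, ?_⟩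
        rintro (rfl | rfl | rfl)
        · exact hx hzG
        · exact hzy rfl
        · exact hxy hzG
      · exact Or.inr ⟨Or.inl rfl, fun h => hx h.1.1⟩
      · exact Or.inr ⟨Or.inr (Or.inr rfl), fun h => hxy h.1.1⟩
  have hxE : x ∈ E := (hE x).mpr (Or.inr (Or.inl rfl))
  have hxyE : x + y ∈ E := (hE _).mpr (Or.inr (Or.inr rfl))
  -- codimension-one sum facts
  have hGr : Module.finrank (ZMod 2) H₀ + 1 = Module.finrank (ZMod 2) G₀ := by
    rw [hG₀, hH₀]; omega
  have L1 : ∀ a b : V, a ∈ G₀ → a ∉ H₀ → b ∈ G₀ → b ∉ H₀ → a + b ∈ H₀ :=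
    fun a b ha ha' hb hb' => codim_one_sum hnest hGr ha ha' hb hb'
  have hVr : Module.finrank (ZMod 2) G₀ + 1 =
      Module.finrank (ZMod 2) (⊤ : Submodule (ZMod 2) V) := by
    rw [hG₀, finrank_top, hV]
  have L2 : ∀ a b : V, a ∉ G₀ → b ∉ G₀ → a + b ∈ G₀ :=
    fun a b ha hb => codim_one_sum le_top hVr Submodule.mem_top ha Submodule.mem_top hb
  -- ================= Triangle-freeness =================
  have tri : TriFree E := by
    rintro ⟨a, ha, b, hb, hab, hsum⟩
    have main : ∀ c : V, c ∈ G₀ → c ∉ H₀ → c ≠ y → (c + x ∉ E ∧ c + (x + y) ∉ E) := by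
      intro c hcG hcH hcy
      constructor
      · intro hin
        have hng : c + x ∉ G₀ := by
          intro h
          have h2 := G₀.add_mem hcG h
          rw [c2] at h2
          exact hx h2
        rcases (hE _).mp hin with ⟨h1, _, _⟩ | he | he
        · exact hng h1
        · have h1 := c2r c x
          rw [he, addself2] at h1
          exact hcH (h1 ▸ h0H)
        · have h1 := c2r c x
          rw [he, add_comm x y, c2r] at h1
          exact hcy h1.symm
      · intro hin
        have hng : c + (x + y) ∉ G₀ := by
          intro h
          have h2 := G₀.add_mem hcG h
          rw [c2] at h2
          exact hxy h2
        rcases (hE _).mp hin with ⟨h1, _, _⟩ | he | he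
        · exact hng h1
        · have h1 := c2r c (x + y)
          rw [he, c2] at h1
          exact hcy h1.symm
        · have h1 := c2r c (x + y)
          rw [he, addself2] at h1
          exact hcH (h1 ▸ h0H)
    have hyE : y ∉ E := by
      intro hin
      rcases (hE y).mp hin with ⟨_, _, h⟩ | he | he
      · exact h rfl
      · exact hx (he ▸ hy)
      · have h1 := c2r x y
        rw [← he, addself2] at h1
        exact hxne0 h1.symm
    rcases (hE a).mp ha with ⟨haG, haH, hay⟩ | rfl | rfl
    · rcases (hE b).mp hb with ⟨hbG, hbH, hby⟩ | rfl | rfl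
      · have h1 : a + b ∈ H₀ := L1 a b haG haH hbG hbH
        rcases (hE _).mp hsum with ⟨_, h2, _⟩ | he | he
        · exact h2 h1
        · exact hx (he ▸ hnest h1)
        · exact hxy (he ▸ hnest h1)
      · exact (main a haG haH hay).1 hsum
      · exact (main a haG haH hay).2 hsum
    · rcases (hE b).mp hb with ⟨hbG, hbH, hby⟩ | rfl | rfl
      · rw [add_comm] at hsum
        exact (main b hbG hbH hby).1 hsum
      · exact hab rfl
      · rw [c2] at hsum
        exact hyE hsum
    · rcases (hE b).mp hb with ⟨hbG, hbH, hby⟩ | rfl | rfl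
      · rw [add_comm] at hsum
        exact (main b hbG hbH hby).2 hsum
      · rw [add_comm, c2] at hsum
        exact hyE hsum
      · exact hab rfl
  -- ================= Critical number =================
  have key3 : ∀ W : Submodule (ZMod 2) V, ((W : Set V) \ {0}) ∩ E = ∅ →
      Module.finrank (ZMod 2) W ≤ n - 1 := by
    intro W hWE
    have havoid : ∀ z, z ∈ W → z ≠ 0 → z ∉ E := by
      intro z hz h0 hzE
      have hmem : z ∈ ((W : Set V) \ {0}) ∩ E := ⟨⟨hz, h0⟩, hzE⟩
      rw [hWE] at hmem
      exact hmem
    by_contra hk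
    push_neg at hk
    have hWn : n ≤ Module.finrank (ZMod 2) W := by omega
    have hsum := Submodule.finrank_sup_add_finrank_inf_eq W G₀
    have hsuple : Module.finrank (ZMod 2) (W ⊔ G₀ : Submodule (ZMod 2) V) ≤ n + 1 := by
      rw [← hV]; exact Submodule.finrank_le _
    have hinf : n - 1 ≤ Module.finrank (ZMod 2) (W ⊓ G₀ : Submodule (ZMod 2) V) := by
      rw [hG₀] at hsum; omega
    have hyW : y ∉ W := by
      intro hyW
      have hle : (W ⊓ G₀ : Submodule (ZMod 2) V) ≤ span (ZMod 2) ({y} : Set V) := by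
        intro z hz
        obtain ⟨hzW, hzG⟩ := Submodule.mem_inf.mp hz
        by_cases hz0 : z = 0
        · subst hz0; exact zero_mem _
        by_cases hzy : z = y
        · subst hzy; exact Submodule.subset_span rfl
        have hzH : z ∈ H₀ := by
          by_contra hzH
          exact havoid z hzW hz0 ((hE z).mpr (Or.inl ⟨hzG, hzH, hzy⟩))
        -- z + y is in E ∩ W, contradiction
        exfalso
        have h1 : z + y ∈ W := add_mem hzW hyW
        have h2 : z + y ∈ G₀ := G₀.add_mem hzG hy
        have h3 : z + y ∉ H₀ := by
          intro h
          have h4 := H₀.add_mem hzH h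
          rw [c2] at h4
          exact hy' h4
        have h5 : z + y ≠ y := by
          intro h
          rw [add_eq_right] at h
          exact hz0 h
        have h6 : z + y ≠ 0 := fun h => h3 (h ▸ h0H)
        exact havoid _ h1 h6 ((hE _).mpr (Or.inl ⟨h2, h3, h5⟩))
      have h7 : Module.finrank (ZMod 2) (W ⊓ G₀ : Submodule (ZMod 2) V) ≤ 1 := by
        have := Submodule.finrank_mono hle
        rw [finrank_span_singleton hyne0] at this
        exact this
      omega
    have hWGH : (W ⊓ G₀ : Submodule (ZMod 2) V) ≤ H₀ := by
      intro z hz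
      obtain ⟨hzW, hzG⟩ := Submodule.mem_inf.mp hz
      by_cases hz0 : z = 0
      · subst hz0; exact zero_mem _
      by_contra hzH
      have hzy : z ≠ y := fun h => hyW (h ▸ hzW)
      exact havoid z hzW hz0 ((hE z).mpr (Or.inl ⟨hzG, hzH, hzy⟩))
    have hHW : (W ⊓ G₀ : Submodule (ZMod 2) V) = H₀ :=
      Submodule.eq_of_le_of_finrank_le hWGH (by rw [hH₀]; omega)
    have hH₀W : H₀ ≤ W := hHW ▸ inf_le_left
    obtain ⟨w, hwW, hwG⟩ : ∃ w, w ∈ W ∧ w ∉ G₀ := by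
      by_contra h
      push_neg at h
      have hle : W ≤ G₀ := fun z hz => h z hz
      have heq : W ⊓ G₀ = W := inf_eq_left.mpr hle
      rw [heq] at hHW
      rw [hHW, hH₀] at hWn
      omega
    have hgG : w + x ∈ G₀ := L2 w x hwG hx
    have hgH : w + x ∉ H₀ := by
      intro h
      have hxW : x ∈ W := by
        have h2 := add_mem hwW (hH₀W h)
        rwa [c2] at h2
      exact havoid x hxW hxne0 hxE
    have hgy : (w + x) + y ∈ H₀ := L1 _ _ hgG hgH hy hy'
    have hxyW : x + y ∈ W := by
      have h2 := add_mem hwW (hH₀W hgy)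
      rw [add_assoc w x y, c2] at h2
      exact h2
    exact havoid _ hxyW hxyne0 hxyE
  have hmemS : (n - 1) ∈ {k : ℕ | ∃ W : Submodule (ZMod 2) V,
      Module.finrank (ZMod 2) W = k ∧ ((W : Set V) \ {0}) ∩ E = ∅} := by
    refine ⟨H₀, hH₀, ?_⟩
    apply Set.eq_empty_iff_forall_notMem.mpr
    rintro z ⟨⟨hzH, hz0⟩, hzE⟩
    rcases (hE z).mp hzE with ⟨_, h2, _⟩ | he | he
    · exact h2 hzH
    · exact hx (hnest (he ▸ hzH))
    · exact hxy (hnest (he ▸ hzH))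
  have hub : ∀ k ∈ {k : ℕ | ∃ W : Submodule (ZMod 2) V,
      Module.finrank (ZMod 2) W = k ∧ ((W : Set V) \ {0}) ∩ E = ∅}, k ≤ n - 1 := by
    rintro k ⟨W, hWk, hWE⟩
    exact hWk ▸ key3 W hWE
  have hSup : sSup {k : ℕ | ∃ W : Submodule (ZMod 2) V,
      Module.finrank (ZMod 2) W = k ∧ ((W : Set V) \ {0}) ∩ E = ∅} = n - 1 := by
    apply le_antisymm
    · exact csSup_le ⟨n - 1, hmemS⟩ hub
    · exact le_csSup ⟨n - 1, hub⟩ hmemS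
  -- ================= I₄-freeness =================
  have I4 : ∀ W : Submodule (ZMod 2) V, Module.finrank (ZMod 2) W = 4 →
      ¬ MeetsInBasis E W := by
    rintro W hW4 ⟨hind, hspan⟩
    set B : Set V := E ∩ ((W : Set V) \ {0}) with hBdef
    have hBW : ∀ z ∈ B, z ∈ W := fun z hz => hz.2.1
    have hBE : ∀ z ∈ B, z ∈ E := fun z hz => hz.1
    have key : ∀ u ∈ B, u ∈ span (ZMod 2) (B \ {u}) → False :=
      fun u hu hs => indep_key hind hu hs
    have memB : ∀ z : V, z ∈ E → z ∈ W → z ≠ 0 → z ∈ B := fun z h1 h2 h3 => ⟨h1, h2, h3⟩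
    set T : Set V := B ∩ (G₀ : Set V) with hTdef
    have hT : ∀ z ∈ T, (z ∈ G₀ ∧ z ∉ H₀ ∧ z ≠ y) ∧ z ∈ B := by
      intro z hz
      rcases (hE z).mp (hBE z hz.1) with h | he | he
      · exact ⟨h, hz.1⟩
      · exact absurd hz.2 (he ▸ hx)
      · exact absurd hz.2 (he ▸ hxy)
    have hBT : ∀ z ∈ B, z ∈ T ∨ z = x ∨ z = x + y := by
      intro z hz
      rcases (hE z).mp (hBE z hz) with h | h | h
      · exact Or.inl ⟨hz, h.1⟩
      · exact Or.inr (Or.inl h)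
      · exact Or.inr (Or.inr h)
    have hWle : W ≤ span (ZMod 2) T ⊔ span (ZMod 2) ({x, x + y} : Set V) := by
      rw [← hspan]
      apply Submodule.span_le.mpr
      intro z hz
      rcases hBT z hz with h | rfl | rfl
      · exact Submodule.mem_sup_left (Submodule.subset_span h)
      · exact Submodule.mem_sup_right (Submodule.subset_span (Set.mem_insert _ _))
      · exact Submodule.mem_sup_right (Submodule.subset_span (Set.mem_insert_of_mem _ rfl))
    have hrT : 2 ≤ Module.finrank (ZMod 2) (span (ZMod 2) T) := by
      have h1 := Submodule.finrank_mono hWle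
      have h2 := finrank_sup_le2 (span (ZMod 2) T) (span (ZMod 2) ({x, x + y} : Set V))
      have h3 := fspair x (x + y)
      rw [hW4] at h1
      omega
    obtain ⟨a, haT⟩ : T.Nonempty := by
      rcases Set.eq_empty_or_nonempty T with h | h
      · rw [h, Submodule.span_empty, finrank_bot] at hrT
        omega
      · exact h
    obtain ⟨b, hbT, hba⟩ : ∃ b ∈ T, b ≠ a := by
      by_contra h
      push_neg at h
      have hsub : T ⊆ {a} := fun z hz => h z hz
      have h2 : Module.finrank (ZMod 2) (span (ZMod 2) T) ≤ 1 :=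
        le_trans (Submodule.finrank_mono (Submodule.span_mono hsub)) (fs1 a)
      omega
    obtain ⟨⟨haG, haH, hay⟩, haB⟩ := hT a haT
    obtain ⟨⟨hbG, hbH, hby⟩, hbB⟩ := hT b hbT
    have habH : a + b ∈ H₀ := L1 a b haG haH hbG hbH
    have hab0 : a + b ≠ 0 := fun h => hba (add_eq_zero_iff2.mp h).symm
    have haW : a ∈ W := hBW a haB
    have hbW : b ∈ W := hBW b hbB
    by_cases hc : ∃ c ∈ T, c ≠ a ∧ c ≠ b
    · -- CASE A: three type-G elements
      obtain ⟨c, hcT, hca, hcb⟩ := hc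
      obtain ⟨⟨hcG, hcH, hcy⟩, hcB⟩ := hT c hcT
      have hcW : c ∈ W := hBW c hcB
      have hsG : a + b + c ∈ G₀ := add_mem (add_mem haG hbG) hcG
      have hsH : a + b + c ∉ H₀ := by
        intro h
        have h2 := H₀.add_mem habH h
        rw [c2] at h2
        exact hcH h2
      have hs0 : a + b + c ≠ 0 := by
        intro h
        rw [add_eq_zero_iff2] at h
        apply key c hcB
        have hmem : a + b ∈ span (ZMod 2) (B \ {c}) :=
          add_mem (Submodule.subset_span (Set.mem_diff_singleton.mpr ⟨haB, Ne.symm hca⟩))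
            (Submodule.subset_span (Set.mem_diff_singleton.mpr ⟨hbB, Ne.symm hcb⟩))
        exact h ▸ hmem
      have hsW : a + b + c ∈ W := add_mem (add_mem haW hbW) hcW
      by_cases hsy : a + b + c = y
      · -- y ∈ W
        have hyW : y ∈ W := hsy ▸ hsW
        obtain ⟨e, heB, hespan⟩ : ∃ e ∈ B, e ∉ span (ZMod 2) ({a, b, c} : Set V) := by
          by_contra h
          push_neg at h
          have hle : W ≤ span (ZMod 2) ({a, b, c} : Set V) := by
            rw [← hspan]
            exact Submodule.span_le.mpr (fun z hz => h z hz)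
          have h2 := Submodule.finrank_mono hle
          have h3 := fstriple a b c
          rw [hW4] at h2
          omega
        rcases hBT e heB with heT | heq | heq
        · -- e is a fourth type-G element
          obtain ⟨⟨heG, heH, hey⟩, _⟩ := hT e heT
          have hea : e ≠ a := by
            intro h
            exact hespan (by rw [h]; exact Submodule.subset_span (by simp))
          have heb : e ≠ b := by
            intro h
            exact hespan (by rw [h]; exact Submodule.subset_span (by simp))
          have hec : e ≠ c := by
            intro h
            exact hespan (by rw [h]; exact Submodule.subset_span (by simp))
          have heW : e ∈ W := hBW e heB
          have hs'G : a + b + e ∈ G₀ := add_mem (add_mem haG hbG) heG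
          have hs'H : a + b + e ∉ H₀ := by
            intro h
            have h2 := H₀.add_mem habH h
            rw [c2] at h2
            exact heH h2
          have hs'0 : a + b + e ≠ 0 := by
            intro h
            rw [add_eq_zero_iff2] at h
            exact hespan (h ▸ add_mem (Submodule.subset_span (by simp))
              (Submodule.subset_span (by simp)))
          have hs'y : a + b + e ≠ y := by
            intro h
            rw [← hsy] at h
            exact hec (add_left_cancel h)
          have hs'E : a + b + e ∈ E := (hE _).mpr (Or.inl ⟨hs'G, hs'H, hs'y⟩)
          have hs'W : a + b + e ∈ W := add_mem (add_mem haW hbW) heW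
          have hs'B := memB _ hs'E hs'W hs'0
          have hs'a : a + b + e ≠ a := by
            intro h
            rw [add_assoc, add_eq_left, add_eq_zero_iff2] at h
            exact heb h.symm
          have hs'b : a + b + e ≠ b := by
            intro h
            rw [add_comm a b, add_assoc, add_eq_left, add_eq_zero_iff2] at h
            exact hea h.symm
          have hs'e : a + b + e ≠ e := by
            intro h
            rw [add_eq_right] at h
            exact hab0 h
          apply key _ hs'B
          exact add_mem (add_mem
            (Submodule.subset_span (Set.mem_diff_singleton.mpr ⟨haB, Ne.symm hs'a⟩))
            (Submodule.subset_span (Set.mem_diff_singleton.mpr ⟨hbB, Ne.symm hs'b⟩)))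
            (Submodule.subset_span (Set.mem_diff_singleton.mpr ⟨heB, Ne.symm hs'e⟩))
        · -- e = x
          rw [heq] at heB
          have hxW : x ∈ W := hBW x heB
          have hxyW : x + y ∈ W := add_mem hxW hyW
          have hxyB : x + y ∈ B := memB _ hxyE hxyW hxyne0
          apply key x heB
          have hxx : (x + y) + (a + b + c) = x := by rw [hsy, c2r]
          have hmem : (x + y) + (a + b + c) ∈ span (ZMod 2) (B \ {x}) :=
            add_mem (Submodule.subset_span (Set.mem_diff_singleton.mpr ⟨hxyB, Ne.symm hxnexy⟩))
              (add_mem (add_mem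
                (Submodule.subset_span (Set.mem_diff_singleton.mpr ⟨haB, fun h => hx (h ▸ haG)⟩))
                (Submodule.subset_span (Set.mem_diff_singleton.mpr ⟨hbB, fun h => hx (h ▸ hbG)⟩)))
                (Submodule.subset_span (Set.mem_diff_singleton.mpr ⟨hcB, fun h => hx (h ▸ hcG)⟩)))
          simpa only [hxx] using hmem
        · -- e = x + y
          rw [heq] at heB
          have hxyW : x + y ∈ W := hBW _ heB
          have hxW : x ∈ W := by
            have h2 := add_mem hxyW hyW
            rwa [c2r] at h2
          have hxB : x ∈ B := memB _ hxE hxW hxne0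
          apply key (x + y) heB
          have hxx : x + (a + b + c) = x + y := by rw [hsy]
          have hmem : x + (a + b + c) ∈ span (ZMod 2) (B \ {x + y}) :=
            add_mem (Submodule.subset_span (Set.mem_diff_singleton.mpr ⟨hxB, hxnexy⟩))
              (add_mem (add_mem
                (Submodule.subset_span (Set.mem_diff_singleton.mpr ⟨haB, fun h => hxy (h ▸ haG)⟩))
                (Submodule.subset_span (Set.mem_diff_singleton.mpr ⟨hbB, fun h => hxy (h ▸ hbG)⟩)))
                (Submodule.subset_span (Set.mem_diff_singleton.mpr ⟨hcB, fun h => hxy (h ▸ hcG)⟩)))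
          simpa only [hxx] using hmem
      · -- a+b+c ≠ y: then a+b+c ∈ B gives a dependence
        have hsE : a + b + c ∈ E := (hE _).mpr (Or.inl ⟨hsG, hsH, hsy⟩)
        have hsB := memB _ hsE hsW hs0
        have hsa : a + b + c ≠ a := by
          intro h
          rw [add_assoc, add_eq_left, add_eq_zero_iff2] at h
          exact hcb (h.symm)
        have hsb : a + b + c ≠ b := by
          intro h
          rw [add_comm a b, add_assoc, add_eq_left, add_eq_zero_iff2] at h
          exact hca (h.symm)
        have hsc : a + b + c ≠ c := by
          intro h
          rw [add_eq_right] at h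
          exact hab0 h
        apply key _ hsB
        exact add_mem (add_mem
          (Submodule.subset_span (Set.mem_diff_singleton.mpr ⟨haB, Ne.symm hsa⟩))
          (Submodule.subset_span (Set.mem_diff_singleton.mpr ⟨hbB, Ne.symm hsb⟩)))
          (Submodule.subset_span (Set.mem_diff_singleton.mpr ⟨hcB, Ne.symm hsc⟩))
    · -- CASE B: T ⊆ {a, b}
      push_neg at hc
      have hxB : x ∈ B := by
        by_contra hxB
        have hle : W ≤ span (ZMod 2) ({a, b, x + y} : Set V) := by
          rw [← hspan]
          apply Submodule.span_le.mpr
          intro z hz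
          rcases hBT z hz with hzT | rfl | rfl
          · by_cases hza : z = a
            · subst hza; exact Submodule.subset_span (by simp)
            · have := hc z hzT hza
              subst this; exact Submodule.subset_span (by simp)
          · exact absurd hz hxB
          · exact Submodule.subset_span (by simp)
        have h2 := Submodule.finrank_mono hle
        have h3 := fstriple a b (x + y)
        rw [hW4] at h2
        omega
      have hxyB : x + y ∈ B := by
        by_contra hxyB
        have hle : W ≤ span (ZMod 2) ({a, b, x} : Set V) := by
          rw [← hspan]
          apply Submodule.span_le.mpr
          intro z hz
          rcases hBT z hz with hzT | rfl | rfl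
          · by_cases hza : z = a
            · subst hza; exact Submodule.subset_span (by simp)
            · have := hc z hzT hza
              subst this; exact Submodule.subset_span (by simp)
          · exact Submodule.subset_span (by simp)
          · exact absurd hz hxyB
        have h2 := Submodule.finrank_mono hle
        have h3 := fstriple a b x
        rw [hW4] at h2
        omega
      have hyW : y ∈ W := by
        have h2 := add_mem (hBW x hxB) (hBW _ hxyB)
        rwa [c2] at h2
      have huG : a + b + y ∈ G₀ := add_mem (add_mem haG hbG) hy
      have huH : a + b + y ∉ H₀ := by
        intro h
        have h2 := H₀.add_mem habH h
        rw [c2] at h2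
        exact hy' h2
      have huy : a + b + y ≠ y := by
        intro h
        rw [add_eq_right] at h
        exact hab0 h
      have hu0 : a + b + y ≠ 0 := fun h => huH (by rw [h]; exact zero_mem _)
      have huE : a + b + y ∈ E := (hE _).mpr (Or.inl ⟨huG, huH, huy⟩)
      have huW : a + b + y ∈ W := add_mem (add_mem haW hbW) hyW
      have huB := memB _ huE huW hu0
      have hua : a + b + y ≠ a := by
        intro h
        rw [add_assoc, add_eq_left, add_eq_zero_iff2] at h
        exact hby h
      have hub' : a + b + y ≠ b := by
        intro h
        rw [add_comm a b, add_assoc, add_eq_left, add_eq_zero_iff2] at h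
        exact hay h
      have hux : a + b + y ≠ x := fun h => hx (h ▸ huG)
      have huxy : a + b + y ≠ x + y := fun h => hxy (h ▸ huG)
      apply key _ huB
      have hy2 : y ∈ span (ZMod 2) (B \ {a + b + y}) := by
        have hmem : x + (x + y) ∈ span (ZMod 2) (B \ {a + b + y}) := add_mem
          (Submodule.subset_span (Set.mem_diff_singleton.mpr ⟨hxB, Ne.symm hux⟩))
          (Submodule.subset_span (Set.mem_diff_singleton.mpr ⟨hxyB, Ne.symm huxy⟩))
        simpa only [c2 x y] using hmem
      exact add_mem (add_mem
        (Submodule.subset_span (Set.mem_diff_singleton.mpr ⟨haB, Ne.symm hua⟩))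
        (Submodule.subset_span (Set.mem_diff_singleton.mpr ⟨hbB, Ne.symm hub'⟩)))
        hy2
  refine ⟨I4, tri, ?_⟩
  rw [hV, hSup]
  omega
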